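/- Under the stated tank setup, if the matrix Ṁ_d(t) is negative semidefinite for all t ∈ [0, t*], then ∫₀^{t*} ẋ(τ)ᵀ F_ext(τ) dτ ≥ −H(0) − T(0); that is, the tank-augmented system is passive over [0, t*] when the inertia is nonincreasing. -/

import Mathlib

/-! The storage function `H + T` (kinetic energy plus tank energy) is nonnegative, and its
derivative `ẋᵀ M ẍ + P_M + φ P_D − γ P_M` is bounded by the supplied power `ẋᵀ F_ext`: the gap
`(1 − φ) P_D − (1 − γ) P_M` is nonnegative because `P_D ≥ 0` and, with `Ṁ_d ≼ 0`, `P_M ≤ 0`.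
Integrating gives `∫ ẋᵀ F_ext ≥ (H + T)(t*) − (H + T)(0) ≥ −H(0) − T(0)`. -/

open Matrix

section

variable {m n : Type*} [Fintype n] {t : ℝ}

theorem HasDerivAt.dotProduct {u v : ℝ → n → ℝ} {u' v' : n → ℝ}
    (hu : HasDerivAt u u' t) (hv : HasDerivAt v v' t) :
    HasDerivAt (fun s => u s ⬝ᵥ v s) (u' ⬝ᵥ v t + u t ⬝ᵥ v') t := by
  have h := HasDerivAt.fun_sum (u := Finset.univ) fun i _ =>
    (hasDerivAt_pi.1 hu i).fun_mul (hasDerivAt_pi.1 hv i)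
  simp only [Finset.sum_add_distrib] at h
  exact h

theorem HasDerivAt.matrix_mulVec {A : ℝ → Matrix m n ℝ} {A' : Matrix m n ℝ}
    {v : ℝ → n → ℝ} {v' : n → ℝ}
    (hA : ∀ i j, HasDerivAt (fun s => A s i j) (A' i j) t) (hv : HasDerivAt v v' t) :
    HasDerivAt (fun s => A s *ᵥ v s) (A' *ᵥ v t + A t *ᵥ v') t :=
  hasDerivAt_pi.2 fun i => by
    simpa only [mulVec, Pi.add_apply] using
      HasDerivAt.dotProduct (hasDerivAt_pi.2 (hA i)) hv

theorem Matrix.IsSymm.dotProduct_mulVec_comm {A : Matrix n n ℝ} (hA : A.IsSymm) (u v : n → ℝ) :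
    u ⬝ᵥ (A *ᵥ v) = v ⬝ᵥ (A *ᵥ u) := by
  rw [dotProduct_mulVec, dotProduct_comm, ← mulVec_transpose, hA.eq]

theorem Matrix.PosSemidef.dotProduct_mulVec_self_nonneg {A : Matrix n n ℝ} (hA : A.PosSemidef)
    (v : n → ℝ) : 0 ≤ v ⬝ᵥ (A *ᵥ v) := by
  simpa using hA.dotProduct_mulVec_nonneg v

theorem hasDerivAt_half_dotProduct_mulVec_self {M : ℝ → Matrix n n ℝ} {M' : Matrix n n ℝ}
    {v : ℝ → n → ℝ} {a : n → ℝ} (hMsymm : (M t).IsSymm)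
    (hM : ∀ i j, HasDerivAt (fun s => M s i j) (M' i j) t) (hv : HasDerivAt v a t) :
    HasDerivAt (fun s => 1 / 2 * (v s ⬝ᵥ (M s *ᵥ v s)))
      (v t ⬝ᵥ (M t *ᵥ a) + 1 / 2 * (v t ⬝ᵥ (M' *ᵥ v t))) t := by
  refine ((hv.dotProduct (HasDerivAt.matrix_mulVec hM hv)).const_mul (1 / 2)).congr_deriv ?_
  rw [dotProduct_add, hMsymm.dotProduct_mulVec_comm a]
  ring

end

theorem Matrix.continuous_of_hasDerivAt_apply {m n : Type*} {A A' : ℝ → Matrix m n ℝ}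
    (h : ∀ i j t, HasDerivAt (fun s => A s i j) (A' t i j) t) : Continuous A :=
  continuous_pi fun i => continuous_pi fun j =>
    continuous_iff_continuousAt.2 fun t => (h i j t).continuousAt

theorem hasDerivAt_half_sq_of_hasDerivAt_div {z : ℝ → ℝ} {p t : ℝ} (hz : z t ≠ 0)
    (h : HasDerivAt z (p / z t) t) : HasDerivAt (fun s => 1 / 2 * z s ^ 2) p t := by
  refine ((h.pow 2).const_mul (1 / 2)).congr_deriv ?_
  field_simp
  ring

theorem mul_sub_mul_le_sub_of_eq_zero_or_eq_one {φ γ p q : ℝ} (hφ : φ = 0 ∨ φ = 1)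
    (hγ : γ = 0 ∨ γ = 1) (hp : 0 ≤ p) (hq : q ≤ 0) : φ * p - γ * q ≤ p - q := by
  rcases hφ with rfl | rfl <;> rcases hγ with rfl | rfl <;> linarith

theorem neg_le_intervalIntegral_of_hasDerivAt_le {S S' f : ℝ → ℝ} {a b : ℝ} (hab : a ≤ b)
    (hS : ∀ t, HasDerivAt S (S' t) t) (hSb : 0 ≤ S b)
    (hf : IntervalIntegrable f MeasureTheory.volume a b) (hle : ∀ t ∈ Set.Ioo a b, S' t ≤ f t) :
    -S a ≤ ∫ t in a..b, f t := by
  have := intervalIntegral.sub_le_integral_of_hasDeriv_right_of_le hab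
    (fun t _ => (hS t).continuousAt.continuousWithinAt) (fun t _ => (hS t).hasDerivWithinAt)
    ((intervalIntegrable_iff_integrableOn_Icc_of_le hab).1 hf) hle
  linarith

theorem tank_passive_nonincreasing_inertia_general {n : ℕ}
    (x : ℝ → Fin n → ℝ) (hx : ContDiff ℝ 2 x)
    (Md Dd Md' Dd' : ℝ → Matrix (Fin n) (Fin n) ℝ)
    (hMd' : ∀ i j t, HasDerivAt (fun s => Md s i j) (Md' t i j) t)
    (hDd' : ∀ i j t, HasDerivAt (fun s => Dd s i j) (Dd' t i j) t)
    (hMdpd : ∀ t, (Md t).PosDef) (hDdpd : ∀ t, (Dd t).PosDef)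
    (Fext : ℝ → Fin n → ℝ)
    (hFext : ∀ t, Fext t = Md t *ᵥ deriv (deriv x) t + Dd t *ᵥ deriv x t)
    (PD PM : ℝ → ℝ)
    (hPD : ∀ t, PD t = deriv x t ⬝ᵥ (Dd t *ᵥ deriv x t))
    (hPM : ∀ t, PM t = (1 / 2) * (deriv x t ⬝ᵥ (Md' t *ᵥ deriv x t)))
    (φ γ : ℝ → ℝ)
    (hφ : ∀ t, φ t = 0 ∨ φ t = 1) (hγ : ∀ t, γ t = 0 ∨ γ t = 1)
    (z : ℝ → ℝ) (hz : ∀ t, z t ≠ 0)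
    (hzdyn : ∀ t, HasDerivAt z (φ t / z t * PD t - γ t / z t * PM t) t)
    (T H : ℝ → ℝ)
    (hT : ∀ t, T t = (1 / 2) * z t ^ 2)
    (hH : ∀ t, H t = (1 / 2) * (deriv x t ⬝ᵥ (Md t *ᵥ deriv x t)))
    (tstar : ℝ) (htstar : 0 ≤ tstar)
    (hneg : ∀ t ∈ Set.Icc (0 : ℝ) tstar, (-(Md' t)).PosSemidef) :
    (∫ τ in (0 : ℝ)..tstar, deriv x τ ⬝ᵥ Fext τ) ≥ -H 0 - T 0 := by
  have hv : ContDiff ℝ 1 (deriv x) := hx.deriv'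
  have hv' (t : ℝ) : HasDerivAt (deriv x) (deriv (deriv x) t) t :=
    (hv.differentiable one_ne_zero t).hasDerivAt
  have hH' (t : ℝ) : HasDerivAt H (deriv x t ⬝ᵥ (Md t *ᵥ deriv (deriv x) t) + PM t) t := by
    rw [funext hH, hPM]
    exact hasDerivAt_half_dotProduct_mulVec_self
      (isHermitian_iff_isSymm.1 (hMdpd t).isHermitian) (fun i j => hMd' i j t) (hv' t)
  have hT' (t : ℝ) : HasDerivAt T (φ t * PD t - γ t * PM t) t := by
    rw [funext hT]
    exact hasDerivAt_half_sq_of_hasDerivAt_div (hz t) <| (hzdyn t).congr_deriv (by ring)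
  have hpower_cont : Continuous fun τ => deriv x τ ⬝ᵥ Fext τ := by
    simp only [hFext]
    exact hv.continuous.dotProduct
      (((continuous_of_hasDerivAt_apply hMd').matrix_mulVec (hv.continuous_deriv le_rfl)).add
        ((continuous_of_hasDerivAt_apply hDd').matrix_mulVec hv.continuous))
  have hstorage_nonneg : 0 ≤ H tstar + T tstar := by
    have := (hMdpd tstar).posSemidef.dotProduct_mulVec_self_nonneg (deriv x tstar)
    rw [hH, hT]
    positivity
  have hsupply (t : ℝ) (ht : t ∈ Set.Ioo 0 tstar) :
      deriv x t ⬝ᵥ (Md t *ᵥ deriv (deriv x) t) + PM t + (φ t * PD t - γ t * PM t) ≤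
        deriv x t ⬝ᵥ Fext t := by
    have hPD_nonneg : 0 ≤ PD t := hPD t ▸ (hDdpd t).posSemidef.dotProduct_mulVec_self_nonneg _
    have hPM_nonpos : PM t ≤ 0 := by
      have := (hneg t (Set.Ioo_subset_Icc_self ht)).dotProduct_mulVec_self_nonneg (deriv x t)
      rw [neg_mulVec, dotProduct_neg] at this
      linarith [hPM t]
    rw [hFext, dotProduct_add, ← hPD]
    linarith [mul_sub_mul_le_sub_of_eq_zero_or_eq_one (hφ t) (hγ t) hPD_nonneg hPM_nonpos]
  have := neg_le_intervalIntegral_of_hasDerivAt_le (S := fun t => H t + T t) htstar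
    (fun t => (hH' t).add (hT' t)) hstorage_nonneg (hpower_cont.intervalIntegrable 0 tstar)
    hsupply
  linarith

/-- Under the tank setup, if `Ṁ_d(t)` is negative semidefinite for all
`t ∈ [0, t*]`, then `∫₀^{t*} ẋᵀ F_ext dτ ≥ −H(0) − T(0)`: the tank-augmented system is
passive over `[0, t*]` when the inertia is nonincreasing. -/
theorem tank_passive_nonincreasing_inertia {n : ℕ} (hn : 0 < n)
    (x : ℝ → Fin n → ℝ) (hx : ContDiff ℝ 2 x)
    (Md Dd Md' Dd' : ℝ → Matrix (Fin n) (Fin n) ℝ)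
    (hMd' : ∀ i j t, HasDerivAt (fun s => Md s i j) (Md' t i j) t)
    (hMd'cont : ∀ i j, Continuous fun t => Md' t i j)
    (hDd' : ∀ i j t, HasDerivAt (fun s => Dd s i j) (Dd' t i j) t)
    (hDd'cont : ∀ i j, Continuous fun t => Dd' t i j)
    (hMdpd : ∀ t, (Md t).PosDef) (hDdpd : ∀ t, (Dd t).PosDef)
    (Fext : ℝ → Fin n → ℝ)
    (hFext : ∀ t, Fext t = Md t *ᵥ deriv (deriv x) t + Dd t *ᵥ deriv x t)
    (PD PM : ℝ → ℝ)
    (hPD : ∀ t, PD t = deriv x t ⬝ᵥ (Dd t *ᵥ deriv x t))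
    (hPM : ∀ t, PM t = (1 / 2) * (deriv x t ⬝ᵥ (Md' t *ᵥ deriv x t)))
    (φ γ : ℝ → ℝ)
    (hφ : ∀ t, φ t = 0 ∨ φ t = 1) (hγ : ∀ t, γ t = 0 ∨ γ t = 1)
    (hφPDint : ∀ t, IntervalIntegrable (fun τ => (1 - φ τ) * PD τ) MeasureTheory.volume 0 t)
    (hγPMint : ∀ t, IntervalIntegrable (fun τ => (1 - γ τ) * PM τ) MeasureTheory.volume 0 t)
    (z : ℝ → ℝ) (hz : ∀ t, z t ≠ 0)
    (hzdyn : ∀ t, HasDerivAt z (φ t / z t * PD t - γ t / z t * PM t) t)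
    (T H : ℝ → ℝ)
    (hT : ∀ t, T t = (1 / 2) * z t ^ 2)
    (hH : ∀ t, H t = (1 / 2) * (deriv x t ⬝ᵥ (Md t *ᵥ deriv x t)))
    (tstar : ℝ) (htstar : 0 ≤ tstar)
    (hneg : ∀ t ∈ Set.Icc (0 : ℝ) tstar, (-(Md' t)).PosSemidef) :
    (∫ τ in (0 : ℝ)..tstar, deriv x τ ⬝ᵥ Fext τ) ≥ -H 0 - T 0 :=
  tank_passive_nonincreasing_inertia_general x hx Md Dd Md' Dd' hMd' hDd' hMdpd hDdpd Fext hFext PD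
    PM hPD hPM φ γ hφ hγ z hz hzdyn T H hT hH tstar htstar hneg
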